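/- arXiv:1608.03697 — 2 statements merged into one kernel-verified Lean document; each statement's English description precedes it below -/
import Mathlib

section
/- Let G = (V,E) be a graph and V' = V − {n} for some vertex n. Let E' be the edge set of G*(V') (edges {u,v} with a path in G whose intermediate vertices lie outside V'), E'' the edge set of the induced subgraph G[V'], and φ({n}) the set of neighbors of n in G. Then E' = E'' ∪ κ(φ({n})), where κ(U) is the set of all unordered pairs of distinct vertices of U. -/
/-- The graph `G*(S)` on vertex subset `S`: distinct `u, v ∈ S` are adjacent iff
there is a path (walk) between `u` and `v` in `G` all of whose intermediate
vertices lie outside `S`. Vertices outside `S` are isolated. -/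
def GStar {V : Type} (G : SimpleGraph V) (S : Set V) : SimpleGraph V where
  Adj u v := u ≠ v ∧ u ∈ S ∧ v ∈ S ∧
    ∃ p : G.Walk u v, ∀ x ∈ p.support, x ≠ u → x ≠ v → x ∉ S
  symm := by
    constructor
    rintro u v ⟨hne, hu, hv, p, hp⟩
    refine ⟨hne.symm, hv, hu, p.reverse, ?_⟩
    intro x hx hxv hxu
    exact hp x (by simpa [SimpleGraph.Walk.support_reverse] using hx) hxu hxv
  loopless := ⟨fun u h => h.1 rfl⟩

/-- `a` and `b` are joined by a walk in `G` whose vertices all lie in `A`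
(i.e. they are in the same component of the induced subgraph on `A`). -/
def ReachIn {V : Type} (G : SimpleGraph V) (A : Set V) (a b : V) : Prop :=
  ∃ p : G.Walk a b, ∀ x ∈ p.support, x ∈ A

namespace SimpleGraph.Walk

variable {V : Type*} {G : SimpleGraph V}

/-- A path cannot revisit `u` or `w`, so here it has length one or two. -/
lemma IsPath.adj_or_adj_adj_of_support_subset {u v w : V} (p : G.Walk u v) (hp : p.IsPath)
    (huv : u ≠ v) (hsupp : ∀ x ∈ p.support, x = u ∨ x = v ∨ x = w) :
    G.Adj u v ∨ (G.Adj u w ∧ G.Adj w v) := by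
  obtain _ | @⟨_, x, _, hux, q⟩ := p
  · exact absurd rfl huv
  rw [cons_isPath_iff] at hp
  rcases hsupp x (by simp) with rfl | rfl | rfl
  · exact absurd q.start_mem_support hp.2
  · exact Or.inl hux
  obtain _ | @⟨_, y, _, hxy, r⟩ := q
  · exact Or.inl hux
  rw [cons_isPath_iff] at hp
  rcases hsupp y (by simp) with rfl | rfl | rfl
  · exact absurd (by simp) hp.2
  · exact Or.inr ⟨hux, hxy⟩
  · exact absurd r.start_mem_support hp.1.2

lemma adj_or_adj_adj_of_support_subset {u v w : V} (p : G.Walk u v) (huv : u ≠ v)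
    (hsupp : ∀ x ∈ p.support, x = u ∨ x = v ∨ x = w) :
    G.Adj u v ∨ (G.Adj u w ∧ G.Adj w v) := by
  classical
  exact p.bypass_isPath.adj_or_adj_adj_of_support_subset _ huv
    fun x hx => hsupp x (p.support_bypass_subset_support hx)

end SimpleGraph.Walk

/-- For `V' = V − {n}`, the edge set of `G*(V')` is
`E'' ∪ κ(φ({n}))`: for `u, v ≠ n`, `{u,v}` is an edge of `G*(V')` iff
`{u,v} ∈ E` or both `u` and `v` are neighbors of `n` in `G`. -/
theorem stmt_6 {V : Type} (G : SimpleGraph V) (n : V) :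
    ∀ u v : V, u ≠ n → v ≠ n →
      ((GStar G ({n}ᶜ : Set V)).Adj u v ↔
        (G.Adj u v ∨ (u ≠ v ∧ G.Adj u n ∧ G.Adj v n))) := by
  intro u v hun hvn
  constructor
  · rintro ⟨huv, -, -, p, hp⟩
    have hsupp : ∀ x ∈ p.support, x = u ∨ x = v ∨ x = n := fun x hx => by
      by_contra! h
      exact hp x hx h.1 h.2.1 h.2.2
    rcases p.adj_or_adj_adj_of_support_subset huv hsupp with h | ⟨hu, hv⟩
    · exact Or.inl h
    · exact Or.inr ⟨huv, hu, hv.symm⟩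
  · rintro (h | ⟨huv, hu, hv⟩)
    · exact ⟨h.ne, hun, hvn, h.toWalk, by simp +contextual⟩
    · refine ⟨huv, hun, hvn, .cons hu (.cons hv.symm .nil), ?_⟩
      simp +contextual
end

section
/- Let G = (V,E) be a tree and V' ⊆ V. Let G*(V') be the graph on V' with an edge {u,v} iff the (unique) path in G between u and v has all intermediate vertices in V − V'. Then G*(V') is a tree if and only if there do not exist u ∈ V − V' and three distinct vertices v1, v2, v3 ∈ V' such that for each i = 1,2,3, all vertices on the path in G between u and v_i, except v_i itself, lie in V − V'. -/
open SimpleGraph Walk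

variable {V : Type} {G : SimpleGraph V} {S : Set V}

theorem SimpleGraph.Walk.reachable_of_forall_mem_edges {W : Type} {H : SimpleGraph W}
    {K : SimpleGraph V} (f : W → V) {a b : W} (w : H.Walk a b)
    (h : ∀ x z, s(x, z) ∈ w.edges → K.Reachable (f x) (f z)) : K.Reachable (f a) (f b) := by
  induction w with
  | nil => rfl
  | cons _ _ ih =>
    exact (h _ _ (by simp)).trans (ih fun x z hxz ↦ h x z (by simp [hxz]))

def EntersAt (G : SimpleGraph V) (S : Set V) (u v : V) : Prop :=
  ∃ p : G.Walk u v, ∀ x ∈ p.support, x ≠ v → x ∉ S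

def HasTripod (G : SimpleGraph V) (S : Set V) : Prop :=
  ∃ u v₁ v₂ v₃ : V, u ∉ S ∧ v₁ ∈ S ∧ v₂ ∈ S ∧ v₃ ∈ S ∧ v₁ ≠ v₂ ∧ v₁ ≠ v₃ ∧ v₂ ≠ v₃ ∧
    EntersAt G S u v₁ ∧ EntersAt G S u v₂ ∧ EntersAt G S u v₃

namespace EntersAt

variable {u v w : V}

theorem refl (v : V) : EntersAt G S v v := ⟨nil, by simp⟩

theorem cons (h : G.Adj u w) (hu : u ∉ S) (hw : EntersAt G S w v) : EntersAt G S u v := by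
  obtain ⟨p, hp⟩ := hw
  refine ⟨Walk.cons h p, fun x hx hxv ↦ ?_⟩
  rw [support_cons, List.mem_cons] at hx
  rcases hx with rfl | hx
  exacts [hu, hp x hx hxv]

theorem eq_of_mem (h : EntersAt G S u v) (hu : u ∈ S) : u = v := by
  obtain ⟨p, hp⟩ := h
  by_contra hne
  exact hp u p.start_mem_support hne hu

theorem not_mem_of_ne (hv : EntersAt G S u v) (hw : EntersAt G S u w) (hvw : v ≠ w) : u ∉ S :=
  fun hu ↦ hvw ((hv.eq_of_mem hu).symm.trans (hw.eq_of_mem hu))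

theorem reachable_deleteEdges {a t : V} (h : EntersAt G S u v) (ha : a ∈ S) (hav : a ≠ v) :
    (G.deleteEdges {s(a, t)}).Reachable u v := by
  obtain ⟨p, hp⟩ := h
  refine reachable_deleteEdges_iff_exists_walk.2 ⟨p, fun he ↦ ?_⟩
  exact hp a (p.fst_mem_support_of_mem_edges he) hav ha

end EntersAt

theorem gStar_adj_of_entersAt {u a b : V} (ha : EntersAt G S u a) (hb : EntersAt G S u b)
    (haS : a ∈ S) (hbS : b ∈ S) (hab : a ≠ b) : (GStar G S).Adj a b := by
  obtain ⟨p, hp⟩ := ha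
  obtain ⟨q, hq⟩ := hb
  refine ⟨hab, haS, hbS, p.reverse.append q, fun x hx hxa hxb ↦ ?_⟩
  rcases (mem_support_append_iff _ _).1 hx with hx | hx
  · exact hp x (by simpa using hx) hxa
  · exact hq x hx hxb

theorem gStar_adj_of_adj_of_entersAt {u w c : V} (hu : u ∈ S) (hc : c ∈ S) (huc : u ≠ c)
    (h : G.Adj u w) (hw : EntersAt G S w c) : (GStar G S).Adj u c := by
  obtain ⟨p, hp⟩ := hw
  refine ⟨huc, hu, hc, Walk.cons h p, fun x hx hxu hxc ↦ ?_⟩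
  rw [support_cons, List.mem_cons] at hx
  exact hp x (hx.resolve_left hxu) hxc

theorem exists_isPath_of_gStar_adj {a b : V} (h : (GStar G S).Adj a b) :
    ∃ p : G.Walk a b, p.IsPath ∧ ∀ x ∈ p.support, x ≠ a → x ≠ b → x ∉ S := by
  classical
  obtain ⟨-, -, -, p, hp⟩ := h
  exact ⟨p.bypass, p.bypass_isPath, fun x hx ↦ hp x (p.support_bypass_subset_support hx)⟩

theorem entersAt_of_isPath_of_mem_edges {a y z : V} {p : G.Walk a z} (hp : p.IsPath)
    (hS : ∀ x ∈ p.support, x ≠ a → x ≠ z → x ∉ S) (he : s(a, y) ∈ p.edges) :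
    EntersAt G S y z := by
  cases p with
  | nil => simp at he
  | cons h q =>
    obtain rfl : y = _ := by simpa using hp.eq_snd_of_mem_edges he
    refine ⟨q, fun x hx hxz ↦ hS x (by simp [hx]) ?_ hxz⟩
    rintro rfl
    exact ((cons_isPath_iff h q).1 hp).2 hx

theorem exists_adj_entersAt_of_gStar_adj {a b : V} (h : (GStar G S).Adj a b) :
    ∃ y, G.Adj a y ∧ EntersAt G S y b := by
  obtain ⟨p, hp, hS⟩ := exists_isPath_of_gStar_adj h
  cases p with
  | nil => exact absurd rfl h.1
  | cons hay q => exact ⟨_, hay, entersAt_of_isPath_of_mem_edges hp hS (by simp)⟩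

theorem exists_entersAt_reachable_gStar {u b : V} (p : G.Walk u b) (hb : b ∈ S) :
    ∃ c, ∃ hc : c ∈ S, EntersAt G S u c ∧
      ((GStar G S).induce S).Reachable ⟨c, hc⟩ ⟨b, hb⟩ := by
  induction p with
  | nil => exact ⟨_, hb, .refl _, .rfl⟩
  | @cons u w b h p ih =>
    obtain ⟨c, hc, hwc, hcb⟩ := ih hb
    by_cases hu : u ∈ S
    · refine ⟨u, hu, .refl u, .trans ?_ hcb⟩
      by_cases huc : u = c
      · subst huc; rfl
      · exact Adj.reachable (gStar_adj_of_adj_of_entersAt hu hc huc h hwc)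
    · exact ⟨c, hc, hwc.cons h hu, hcb⟩

theorem gStar_induce_preconnected (hG : G.Preconnected) :
    ((GStar G S).induce S).Preconnected := by
  rintro ⟨a, ha⟩ ⟨b, hb⟩
  obtain ⟨c, hc, hac, hcb⟩ := exists_entersAt_reachable_gStar (hG a b).some hb
  obtain rfl := hac.eq_of_mem ha
  exact hcb

theorem HasTripod.not_isAcyclic_gStar_induce (h : HasTripod G S) :
    ¬ ((GStar G S).induce S).IsAcyclic := by
  classical
  obtain ⟨u, v₁, v₂, v₃, -, h₁, h₂, h₃, h₁₂, h₁₃, h₂₃, e₁, e₂, e₃⟩ := h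
  intro hac
  refine hac.colorable_two.cliqueFree (by norm_num : 2 < 3) {⟨v₁, h₁⟩, ⟨v₂, h₂⟩, ⟨v₃, h₃⟩}
    (is3Clique_triple_iff.2 ⟨?_, ?_, ?_⟩)
  exacts [gStar_adj_of_entersAt e₁ e₂ h₁ h₂ h₁₂, gStar_adj_of_entersAt e₁ e₃ h₁ h₃ h₁₃,
    gStar_adj_of_entersAt e₂ e₃ h₂ h₃ h₂₃]

theorem hasTripod_of_adj_of_entersAt {a b z y : V} (hay : G.Adj a y) (hyb : EntersAt G S y b)
    (hyz : EntersAt G S y z) (ha : a ∈ S) (hb : b ∈ S) (hz : z ∈ S) (hab : a ≠ b)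
    (haz : a ≠ z) (hbz : b ≠ z) : HasTripod G S := by
  have hy : y ∉ S := hyb.not_mem_of_ne hyz hbz
  exact ⟨y, a, b, z, hy, ha, hb, hz, hab, haz, hbz, (EntersAt.refl a).cons hay.symm hy, hyb, hyz⟩

theorem reachable_deleteEdges_of_gStar_adj (hT : ¬ HasTripod G S) {a b y x z : V}
    (hay : G.Adj a y) (hyb : EntersAt G S y b) (ha : a ∈ S) (hb : b ∈ S) (hab : a ≠ b)
    (hxz : (GStar G S).Adj x z) (hne : s(x, z) ≠ s(a, b)) :
    (G.deleteEdges {s(a, y)}).Reachable x z := by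
  obtain ⟨p, hp, hS⟩ := exists_isPath_of_gStar_adj hxz
  by_cases he : s(a, y) ∈ p.edges
  · exfalso
    have hax : a = x ∨ a = z := by
      by_contra! h
      exact hS a (p.fst_mem_support_of_mem_edges he) h.1 h.2 ha
    rcases hax with rfl | rfl
    · have hyz := entersAt_of_isPath_of_mem_edges hp hS he
      exact hT (hasTripod_of_adj_of_entersAt hay hyb hyz ha hb hxz.2.2.1 hab hxz.1
        (by rintro rfl; exact hne rfl))
    · have hyx := entersAt_of_isPath_of_mem_edges hp.reverse
        (fun t ht h₁ h₂ ↦ hS t (by simpa using ht) h₂ h₁) (by simpa using he)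
      exact hT (hasTripod_of_adj_of_entersAt hay hyb hyx ha hb hxz.2.1 hab hxz.1.symm
        (by rintro rfl; exact hne Sym2.eq_swap))
  · exact reachable_deleteEdges_iff_exists_walk.2 ⟨p, he⟩

theorem gStar_induce_isAcyclic (hG : G.IsAcyclic) (hT : ¬ HasTripod G S) :
    ((GStar G S).induce S).IsAcyclic := by
  refine isAcyclic_iff_forall_adj_isBridge.2 fun a b hab ↦ ?_
  obtain ⟨y, hay, hyb⟩ := exists_adj_entersAt_of_gStar_adj hab
  rw [isBridge_iff, reachable_deleteEdges_iff_exists_walk]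
  rintro ⟨w, hw⟩
  refine isBridge_iff.1 (isAcyclic_iff_forall_adj_isBridge.1 hG hay) ?_
  have hne : ∀ x z : S, s(x, z) ∈ w.edges → s(x.1, z.1) ≠ s(a.1, b.1) := fun x z hxz h ↦
    hw (Sym2.map.injective Subtype.val_injective
      (show Sym2.map Subtype.val s(x, z) = Sym2.map Subtype.val s(a, b) from h) ▸ hxz)
  have hab' : (G.deleteEdges {s(a.1, y)}).Reachable a b :=
    w.reachable_of_forall_mem_edges Subtype.val fun x z hxz ↦
      reachable_deleteEdges_of_gStar_adj hT hay hyb a.2 b.2 hab.1 (w.adj_of_mem_edges hxz)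
        (hne x z hxz)
  exact hab'.trans (hyb.reachable_deleteEdges a.2 hab.1).symm

theorem stmt_8_general {V : Type} (G : SimpleGraph V) (hG : G.IsTree)
    (V' : Set V) (hV' : V'.Nonempty) :
    ((GStar G V').induce V').IsTree ↔
      ¬ ∃ (u v₁ v₂ v₃ : V), u ∉ V' ∧ v₁ ∈ V' ∧ v₂ ∈ V' ∧ v₃ ∈ V' ∧
        v₁ ≠ v₂ ∧ v₁ ≠ v₃ ∧ v₂ ≠ v₃ ∧
        (∃ p : G.Walk u v₁, ∀ x ∈ p.support, x ≠ v₁ → x ∉ V') ∧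
        (∃ p : G.Walk u v₂, ∀ x ∈ p.support, x ≠ v₂ → x ∉ V') ∧
        (∃ p : G.Walk u v₃, ∀ x ∈ p.support, x ≠ v₃ → x ∉ V') := by
  change _ ↔ ¬ HasTripod G V'
  constructor
  · exact fun htree htri ↦ htri.not_isAcyclic_gStar_induce htree.isAcyclic
  · intro hT
    have : Nonempty V' := hV'.to_subtype
    exact ⟨⟨gStar_induce_preconnected hG.connected.preconnected⟩,
      gStar_induce_isAcyclic hG.isAcyclic hT⟩

/-- For a tree `G` and nonempty `V' ⊆ V`, the graph `G*(V')` (as a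
graph on vertex set `V'`) is a tree iff there do not exist `u ∈ V − V'` and three
distinct vertices `v₁, v₂, v₃ ∈ V'` such that for each `i`, all vertices on the
path in `G` between `u` and `vᵢ`, except `vᵢ` itself, lie in `V − V'`. -/
theorem stmt_8 {V : Type} [Fintype V] (G : SimpleGraph V) (hG : G.IsTree)
    (V' : Set V) (hV' : V'.Nonempty) :
    ((GStar G V').induce V').IsTree ↔
      ¬ ∃ (u v₁ v₂ v₃ : V), u ∉ V' ∧ v₁ ∈ V' ∧ v₂ ∈ V' ∧ v₃ ∈ V' ∧
        v₁ ≠ v₂ ∧ v₁ ≠ v₃ ∧ v₂ ≠ v₃ ∧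
        (∃ p : G.Walk u v₁, ∀ x ∈ p.support, x ≠ v₁ → x ∉ V') ∧
        (∃ p : G.Walk u v₂, ∀ x ∈ p.support, x ≠ v₂ → x ∉ V') ∧
        (∃ p : G.Walk u v₃, ∀ x ∈ p.support, x ≠ v₃ → x ∉ V') :=
  stmt_8_general G hG V' hV'
end
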